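/- With X, {e_k; f_k}, Q_n, Φ_r as above: the map Φ_r : X → X is continuous. -/

import Mathlib

/-!
Fix `x` and choose `N ≥ 1` with `‖Q_N x‖ < r / 2`. For `y` within `r / 2` of `x` we get
`‖Q_N y‖ ≤ r`, and since `Q_k = Q_k Q_N` with `‖Q_k‖ = 1` for `k ≥ N`, every cutoff
`φ_r(‖Q_k y‖)` with `k ≥ N` equals `1`. Hence near `x` the series defining `Φ_r y` differs from
the basis expansion of `y` only in its first `N` terms, so `Φ_r` agrees there with
`y ↦ y + ∑_{k<N} (φ_r(‖Q_k y‖) - 1) f_k(y) e_k`, which is continuous.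
-/

open Filter Finset Topology

/-- The tail projection `Q_{n+1} = I - P_n` associated to a Schauder basis system,
where `P_n x = ∑_{k<n} f_k(x) e_k`.  Thus `tailProj f e n` is the paper's `Q_{n+1}`
and also its `R_n`. -/
noncomputable def tailProj {X : Type*} [NormedAddCommGroup X] [NormedSpace ℝ X]
    (f : ℕ → X →L[ℝ] ℝ) (e : ℕ → X) (n : ℕ) : X →L[ℝ] X :=
  ContinuousLinearMap.id ℝ X - ∑ k ∈ Finset.range n, (f k).smulRight (e k)

/-- The piecewise-linear cutoff function `φ_r`: equal to `1` on `[-r, r]`,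
`0` outside `(-2r, 2r)`, and `2 - |t|/r` in between. -/
noncomputable def phi (r t : ℝ) : ℝ :=
  if |t| ≤ r then 1 else if |t| ≤ 2 * r then 2 - |t| / r else 0

lemma phi_eq_min_max {r : ℝ} (hr : 0 < r) (t : ℝ) :
    phi r t = min 1 (max 0 (2 - |t| / r)) := by
  unfold phi
  split_ifs with h₁ h₂
  · have : |t| / r ≤ 1 := (div_le_one hr).mpr h₁
    rw [max_eq_right (by linarith), min_eq_left (by linarith)]
  · have h₁' : 1 ≤ |t| / r := (le_div_iff₀ hr).mpr (by linarith)
    have h₂' : |t| / r ≤ 2 := (div_le_iff₀ hr).mpr (by linarith)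
    rw [max_eq_right (by linarith), min_eq_right (by linarith)]
  · have : 2 ≤ |t| / r := (le_div_iff₀ hr).mpr (by linarith)
    rw [max_eq_left (by linarith), min_eq_right zero_le_one]

lemma continuous_phi {r : ℝ} (hr : 0 < r) : Continuous (phi r) := by
  rw [funext (phi_eq_min_max hr)]
  fun_prop

lemma phi_eq_one {r t : ℝ} (h : |t| ≤ r) : phi r t = 1 := if_pos h

lemma tendsto_sum_range_of_eq_of_ge {X : Type*} [AddCommGroup X] [TopologicalSpace X]
    [IsTopologicalAddGroup X] {a b : ℕ → X} {s : X} {N : ℕ} (hab : ∀ k ≥ N, a k = b k)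
    (hb : Tendsto (fun n => ∑ k ∈ range n, b k) atTop (𝓝 s)) :
    Tendsto (fun n => ∑ k ∈ range n, a k) atTop (𝓝 (s + ∑ k ∈ range N, (a k - b k))) := by
  refine (hb.add_const _).congr' ?_
  filter_upwards [eventually_ge_atTop N] with n hn
  rw [← eventually_constant_sum (fun k hk => sub_eq_zero.mpr (hab k hk)) hn, sum_sub_distrib,
    add_sub_cancel]

section TailProj

variable {X : Type*} [NormedAddCommGroup X] [NormedSpace ℝ X] {f : ℕ → X →L[ℝ] ℝ} {e : ℕ → X}

lemma tailProj_apply (n : ℕ) (x : X) :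
    tailProj f e n x = x - ∑ k ∈ range n, f k x • e k := by
  simp [tailProj]

lemma tendsto_tailProj_apply_zero {x : X}
    (hx : Tendsto (fun n => ∑ k ∈ range n, f k x • e k) atTop (𝓝 x)) :
    Tendsto (fun n => tailProj f e n x) atTop (𝓝 0) := by
  simpa [tailProj_apply] using (tendsto_const_nhds (x := x)).sub hx

variable (hbi : ∀ k j, f k (e j) = if k = j then (1 : ℝ) else 0)
include hbi

lemma tailProj_apply_basis {j k : ℕ} (h : j < k) : tailProj f e k (e j) = 0 := by
  simp [tailProj_apply, hbi, ite_smul, mem_range.mpr h]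

lemma tailProj_tailProj_of_le {N k : ℕ} (h : N ≤ k) (y : X) :
    tailProj f e k (tailProj f e N y) = tailProj f e k y := by
  conv_lhs => rw [tailProj_apply N y]
  rw [map_sub, map_sum, sub_eq_self]
  refine sum_eq_zero fun j hj => ?_
  rw [map_smul, tailProj_apply_basis hbi ((mem_range.mp hj).trans_le h), smul_zero]

lemma phi_norm_tailProj_eq_one {r : ℝ} {N k : ℕ} (h : N ≤ k) (hk : ‖tailProj f e k‖ ≤ 1)
    {y : X} (hy : ‖tailProj f e N y‖ ≤ r) : phi r ‖tailProj f e k y‖ = 1 := by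
  refine phi_eq_one ?_
  rw [abs_norm, ← tailProj_tailProj_of_le hbi h]
  exact (ContinuousLinearMap.le_of_opNorm_le _ hk _).trans (by rwa [one_mul])

lemma tendsto_sum_phi_of_norm_tailProj_le {r : ℝ} {N : ℕ}
    (hR : ∀ k ≥ N, ‖tailProj f e k‖ ≤ 1) {y : X} (hy : ‖tailProj f e N y‖ ≤ r)
    (hexp : Tendsto (fun n => ∑ k ∈ range n, f k y • e k) atTop (𝓝 y)) :
    Tendsto (fun n => ∑ k ∈ range n, phi r ‖tailProj f e k y‖ • (f k y • e k)) atTop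
      (𝓝 (y + ∑ k ∈ range N, (phi r ‖tailProj f e k y‖ - 1) • (f k y • e k))) := by
  simp_rw [sub_smul, one_smul]
  refine tendsto_sum_range_of_eq_of_ge (fun k hk => ?_) hexp
  rw [phi_norm_tailProj_eq_one hbi hk (hR k hk) hy, one_smul]

end TailProj

theorem Phi_continuous_general
    {X : Type*} [NormedAddCommGroup X] [NormedSpace ℝ X]
    (e : ℕ → X) (f : ℕ → X →L[ℝ] ℝ)
    (hexp : ∀ x : X, Tendsto (fun n => ∑ k ∈ Finset.range n, f k x • e k) atTop (𝓝 x))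
    (hbi : ∀ k j, f k (e j) = if k = j then (1 : ℝ) else 0)
    (hR : ∀ n, 1 ≤ n → ‖tailProj f e n‖ = 1)
    (r : ℝ) (hr : 0 < r) (Φ : X → X)
    (hΦ : ∀ x : X, Tendsto
      (fun n => ∑ k ∈ Finset.range n, phi r ‖tailProj f e k x‖ • (f k x • e k))
      atTop (𝓝 (Φ x))) :
    Continuous Φ := by
  refine continuous_iff_continuousAt.mpr fun x => ?_
  obtain ⟨N, hN, hNx⟩ := ((eventually_ge_atTop 1).and <|
    (tendsto_norm_zero.comp (tendsto_tailProj_apply_zero (hexp x))).eventually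
      (gt_mem_nhds (half_pos hr))).exists
  have hR' : ∀ k ≥ N, ‖tailProj f e k‖ ≤ 1 := fun k hk => (hR k (hN.trans hk)).le
  have hlocal : ∀ y ∈ Metric.ball x (r / 2), ‖tailProj f e N y‖ ≤ r := fun y hy =>
    calc ‖tailProj f e N y‖ ≤ ‖tailProj f e N x‖ + ‖tailProj f e N y - tailProj f e N x‖ :=
          norm_le_norm_add_norm_sub' _ _
      _ ≤ r / 2 + ‖y - x‖ := by
          refine add_le_add hNx.le ?_
          rw [← map_sub]
          exact (ContinuousLinearMap.le_of_opNorm_le _ (hR' N le_rfl) (y - x)).trans_eq (one_mul _)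
      _ ≤ r := by linarith [mem_ball_iff_norm.mp hy]
  have hmodel : Continuous fun y =>
      y + ∑ k ∈ range N, (phi r ‖tailProj f e k y‖ - 1) • (f k y • e k) := by
    have := continuous_phi hr
    fun_prop
  refine hmodel.continuousAt.congr (eventually_of_mem (Metric.ball_mem_nhds x (half_pos hr))
    fun y hy => ?_)
  exact tendsto_nhds_unique
    (tendsto_sum_phi_of_norm_tailProj_le hbi hR' (hlocal y hy) (hexp y)) (hΦ y)

/-- The map `Φ_r : X → X` is continuous. -/
theorem Phi_continuous
    {X : Type*} [NormedAddCommGroup X] [NormedSpace ℝ X] [CompleteSpace X]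
    (e : ℕ → X) (f : ℕ → X →L[ℝ] ℝ)
    (hexp : ∀ x : X, Tendsto (fun n => ∑ k ∈ Finset.range n, f k x • e k) atTop (𝓝 x))
    (hbi : ∀ k j, f k (e j) = if k = j then (1 : ℝ) else 0)
    (hR : ∀ n, 1 ≤ n → ‖tailProj f e n‖ = 1)
    (r : ℝ) (hr : 0 < r) (Φ : X → X)
    (hΦ : ∀ x : X, Tendsto
      (fun n => ∑ k ∈ Finset.range n, phi r ‖tailProj f e k x‖ • (f k x • e k))
      atTop (𝓝 (Φ x))) :
    Continuous Φ :=
  Phi_continuous_general e f hexp hbi hR r hr Φ hΦ
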